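/- Let 2 ≤ r ≤ n and let V₁, V₂ be proper votes corresponding to injections σ₁, σ₂ from {1,…,r} into {1,…,n}, with sufficient statistic t = A_{n,r}(e_{σ₁} + e_{σ₂}) where e_σ denotes the standard unit vector of ℕ^{S_{n,r}}. Define the graph G on vertex set {1,…,r} with an edge {j,j'} (j ≠ j') if and only if the multisets {σ₁(j), σ₂(j)} and {σ₁(j'), σ₂(j')} share a candidate, and let L be the number of connected components of G other than isolated vertices j with σ₁(j) = σ₂(j). Then the fiber F_t = {x ∈ ℕ^{S_{n,r}} : A_{n,r} x = t} has exactly two elements if and only if L = 2, and in that case, writing F_t = {x, y}, every Markov basis of A_{n,r} contains x − y or y − x. -/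

import Mathlib

/-!
A table in the fiber of `e_{σ₁} + e_{σ₂}` consists of two votes `a, b` with
`{a j, b j} = {σ₁ j, σ₂ j}` at every position `j`. Injectivity of `a` and `b` forces the choice
between `a j = σ₁ j` and `a j = σ₂ j` to be constant along the edges of the block graph, and
conversely every choice that is constant on components yields two injections. Hence the fiber
is in bijection with the unordered splittings `{P, Pᶜ}` of the set of nontrivial components,
and there are exactly two of those iff `L = 2`. A two-element fiber `{x, y}` is connected only
by the move `±(x - y)`, which therefore lies in every Markov basis.
-/

/-- The sufficient-statistic map (configuration matrix `A_{n,r}` applied to a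
nonnegative integer vector indexed by `S_{n,r}`, the injections from `Fin r` to `Fin n`):
the `(j,k)` coordinate counts, with multiplicity `x σ`, the votes `σ` with `σ j = k`. -/
noncomputable def suffN (n r : ℕ) (x : (Fin r ↪ Fin n) → ℕ) : Fin r × Fin n → ℕ :=
  fun p => ∑ σ : Fin r ↪ Fin n, if σ p.1 = p.2 then x σ else 0

/-- The configuration matrix `A_{n,r}` applied to an integer vector. -/
noncomputable def suffZ (n r : ℕ) (z : (Fin r ↪ Fin n) → ℤ) : Fin r × Fin n → ℤ :=
  fun p => ∑ σ : Fin r ↪ Fin n, if σ p.1 = p.2 then z σ else 0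

/-- The degree of a move `z`: `Σ_σ max(z σ, 0)`. -/
noncomputable def moveDeg (n r : ℕ) (z : (Fin r ↪ Fin n) → ℤ) : ℕ :=
  ∑ σ : Fin r ↪ Fin n, (z σ).toNat

/-- `B` is a Markov basis for `A_{n,r}`: a finite set of moves (elements of the integer
kernel of `A_{n,r}`) such that any two points of a common fiber are connected by a path
staying in the fiber whose steps are elements of `B ∪ (-B)`. -/
def IsMarkovBasis (n r : ℕ) (B : Finset ((Fin r ↪ Fin n) → ℤ)) : Prop :=
  (∀ z ∈ B, suffZ n r z = 0) ∧
  ∀ x y : (Fin r ↪ Fin n) → ℕ, suffN n r x = suffN n r y →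
    ∃ (m : ℕ) (w : ℕ → (Fin r ↪ Fin n) → ℕ),
      w 0 = x ∧ w m = y ∧
      (∀ i ≤ m, suffN n r (w i) = suffN n r x) ∧
      (∀ i < m, (fun σ => (w (i+1) σ : ℤ) - (w i σ : ℤ)) ∈ B ∨
                (fun σ => (w i σ : ℤ) - (w (i+1) σ : ℤ)) ∈ B)

/-- The proper vote (0–1 matrix) corresponding to an injection `σ`. -/
noncomputable def voteMat (n r : ℕ) (σ : Fin r ↪ Fin n) : Matrix (Fin r) (Fin n) ℤ :=
  fun j k => if σ j = k then 1 else 0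

/-- The graph on positions `{1,…,r}` associated with two proper votes `σ₁, σ₂`: positions
`j ≠ j'` are adjacent iff the blocks (multisets) `{σ₁ j, σ₂ j}` and `{σ₁ j', σ₂ j'}`
share a candidate. -/
def blockGraph (n r : ℕ) (σ₁ σ₂ : Fin r ↪ Fin n) : SimpleGraph (Fin r) where
  Adj j j' := j ≠ j' ∧
    (σ₁ j = σ₁ j' ∨ σ₁ j = σ₂ j' ∨ σ₂ j = σ₁ j' ∨ σ₂ j = σ₂ j')
  symm := by
    refine ⟨?_⟩
    intro j j' h
    refine ⟨h.1.symm, ?_⟩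
    rcases h.2 with h | h | h | h
    · exact Or.inl h.symm
    · exact Or.inr (Or.inr (Or.inl h.symm))
    · exact Or.inr (Or.inl h.symm)
    · exact Or.inr (Or.inr (Or.inr h.symm))
  loopless := ⟨fun j h => h.1 rfl⟩

/-- A connected component of the block graph is brushed aside iff it is an isolated
vertex `j` whose block is of the form `{k, k}`, i.e. `σ₁ j = σ₂ j`. -/
def IsTrivialComp (n r : ℕ) (σ₁ σ₂ : Fin r ↪ Fin n)
    (c : (blockGraph n r σ₁ σ₂).ConnectedComponent) : Prop :=
  ∃ j : Fin r, c = (blockGraph n r σ₁ σ₂).connectedComponentMk j ∧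
    σ₁ j = σ₂ j ∧ ∀ j', ¬ (blockGraph n r σ₁ σ₂).Adj j j'

/-- `L`: the number of connected components of the block graph other than isolated
vertices `j` with `σ₁ j = σ₂ j`. -/
noncomputable def numComp (n r : ℕ) (σ₁ σ₂ : Fin r ↪ Fin n) : ℕ :=
  Nat.card {c : (blockGraph n r σ₁ σ₂).ConnectedComponent //
    ¬ IsTrivialComp n r σ₁ σ₂ c}

lemma Nat.eq_or_eq_of_card_eq_two {α : Type*} (h : Nat.card α = 2) {x y : α} (hxy : x ≠ y)
    (z : α) : z = x ∨ z = y := by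
  obtain ⟨w, -, hw⟩ := (Nat.card_eq_two_iff' x).mp h
  by_cases hz : z = x
  · exact Or.inl hz
  · exact Or.inr ((hw z hz).trans (hw y hxy.symm).symm)

lemma Set.compl_inter_eq_inter_iff {α : Type*} {P Q S : Set α} :
    Pᶜ ∩ S = Q ∩ S ↔ P ∩ S = Qᶜ ∩ S := by
  simp only [Set.ext_iff, Set.mem_inter_iff, Set.mem_compl_iff]
  exact forall_congr' fun x => by tauto

lemma exists_step_of_forall_eq_or_eq {α : Type*} {x y : α} (hxy : x ≠ y) {w : ℕ → α} :
    ∀ {m : ℕ}, w 0 = x → w m = y → (∀ i ≤ m, w i = x ∨ w i = y) →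
      ∃ i < m, w i = x ∧ w (i + 1) = y
  | 0, h0, hm, _ => absurd (h0.symm.trans hm) hxy
  | m + 1, h0, hm, hw => by
    rcases hw m (by omega) with hx | hy
    · exact ⟨m, by omega, hx, hm⟩
    · obtain ⟨i, hi, h⟩ := exists_step_of_forall_eq_or_eq hxy h0 hy fun i hi => hw i (by omega)
      exact ⟨i, by omega, h⟩

/-- `Φ` exhibits `X` as the set of unordered splittings `{P ∩ S, Pᶜ ∩ S}` of `S`. -/
def ClassifiesUnorderedSplits {C X : Type*} (S : Set C) (Φ : Set C → X) : Prop :=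
  Function.Surjective Φ ∧ ∀ P Q, Φ P = Φ Q ↔ P ∩ S = Q ∩ S ∨ P ∩ S = Qᶜ ∩ S

namespace ClassifiesUnorderedSplits

variable {C X : Type*} {S : Set C} {Φ : Set C → X}

lemma ne_of_mem (h : ClassifiesUnorderedSplits S Φ) {P Q : Set C} {a b : C} (ha : a ∈ S)
    (hb : b ∈ S) (hab : ¬(a ∈ P ↔ a ∈ Q)) (hba : b ∈ P ↔ b ∈ Q) : Φ P ≠ Φ Q := by
  rw [Ne, h.2]
  rintro (hPQ | hPQ)
  · exact hab (by simpa [ha] using Set.ext_iff.mp hPQ a)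
  · have := Set.ext_iff.mp hPQ b
    simp only [Set.mem_inter_iff, Set.mem_compl_iff, hb, and_true] at this
    tauto

lemma eq_empty_of_subsingleton (h : ClassifiesUnorderedSplits S Φ) (hS : S.Subsingleton)
    (P : Set C) : Φ P = Φ ∅ := by
  rw [h.2]
  rcases (P ∩ S).eq_empty_or_nonempty with hP | ⟨c, hcP, hcS⟩
  · exact Or.inl (by rw [hP, Set.empty_inter])
  · refine Or.inr ?_
    rw [Set.compl_empty, Set.univ_inter, Set.inter_eq_right]
    exact fun d hd => hS hcS hd ▸ hcP

lemma card_eq_two_of_card_eq_two (h : ClassifiesUnorderedSplits S Φ) (hS : Nat.card S = 2) :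
    Nat.card X = 2 := by
  obtain ⟨⟨c₁, h₁⟩, ⟨c₂, h₂⟩, hne, huniv⟩ := Nat.card_eq_two_iff.mp hS
  have hc : c₁ ≠ c₂ := fun e => hne (Subtype.ext e)
  have agree (P Q : Set C) (h₁ : c₁ ∈ P ↔ c₁ ∈ Q) (h₂ : c₂ ∈ P ↔ c₂ ∈ Q) : P ∩ S = Q ∩ S := by
    ext c
    refine and_congr_left fun hc => ?_
    have : (⟨c, hc⟩ : S) ∈ ({⟨c₁, _⟩, ⟨c₂, _⟩} : Set S) := huniv ▸ Set.mem_univ _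
    rcases this with e | e <;> cases congrArg Subtype.val e <;> assumption
  refine Nat.card_eq_two_iff.mpr
    ⟨Φ ∅, Φ {c₁}, h.ne_of_mem h₁ h₂ (by simp) (by simp [hc.symm]), ?_⟩
  refine Set.eq_univ_of_forall fun x => ?_
  obtain ⟨P, rfl⟩ := h.1 x
  simp only [Set.mem_insert_iff, Set.mem_singleton_iff, h.2]
  by_cases hP₁ : c₁ ∈ P <;> by_cases hP₂ : c₂ ∈ P
  · exact Or.inl (Or.inr (agree _ _ (by simp [hP₁]) (by simp [hP₂])))
  · exact Or.inr (Or.inl (agree _ _ (by simp [hP₁]) (by simp [hP₂, hc.symm])))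
  · exact Or.inr (Or.inr (agree _ _ (by simp [hP₁]) (by simp [hP₂, hc.symm])))
  · exact Or.inl (Or.inl (agree _ _ (by simp [hP₁]) (by simp [hP₂])))

lemma card_eq_two_iff (h : ClassifiesUnorderedSplits S Φ) : Nat.card X = 2 ↔ Nat.card S = 2 := by
  refine ⟨fun hX => ?_, h.card_eq_two_of_card_eq_two⟩
  by_contra hS
  rcases S.subsingleton_or_nontrivial with hsub | ⟨c₁, h₁, c₂, h₂, h12⟩
  · obtain ⟨x, y, hxy, -⟩ := Nat.card_eq_two_iff.mp hX
    obtain ⟨P, rfl⟩ := h.1 x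
    obtain ⟨Q, rfl⟩ := h.1 y
    exact hxy ((h.eq_empty_of_subsingleton hsub P).trans (h.eq_empty_of_subsingleton hsub Q).symm)
  · obtain ⟨c₃, h₃, h31, h32⟩ : ∃ c ∈ S, c ≠ c₁ ∧ c ≠ c₂ := by
      by_contra! hall
      refine hS (Nat.card_eq_two_iff.mpr ⟨⟨c₁, h₁⟩, ⟨c₂, h₂⟩, by simpa using h12, ?_⟩)
      refine Set.eq_univ_of_forall fun ⟨c, hc⟩ => ?_
      rcases eq_or_ne c c₁ with rfl | hc₁
      · simp
      · simp [hall c hc hc₁]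
    have ne₀₁ : Φ ∅ ≠ Φ {c₁} := h.ne_of_mem h₁ h₂ (by simp) (by simp [h12.symm])
    have ne₀₂ : Φ ∅ ≠ Φ {c₂} := h.ne_of_mem h₂ h₁ (by simp) (by simp [h12])
    have ne₁₂ : Φ {c₁} ≠ Φ {c₂} := h.ne_of_mem h₁ h₃ (by simp [h12]) (by simp [h31, h32])
    rcases Nat.eq_or_eq_of_card_eq_two hX ne₀₁ (Φ {c₂}) with e | e
    exacts [ne₀₂ e.symm, ne₁₂ e.symm]

end ClassifiesUnorderedSplits

section PairVec

variable {I : Type*} [DecidableEq I]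

def pairVec (a b : I) : I → ℕ := fun i => (if i = a then 1 else 0) + (if i = b then 1 else 0)

lemma pairVec_eq_count (a b : I) : pairVec a b = fun i => ({a, b} : Multiset I).count i := by
  funext i
  rw [Multiset.insert_eq_cons, Multiset.count_cons, Multiset.count_singleton, add_comm]
  rfl

lemma pairVec_eq_pairVec_iff {a b c d : I} :
    pairVec a b = pairVec c d ↔ (a = c ∧ b = d) ∨ (a = d ∧ b = c) := by
  constructor
  · intro h
    have ha := congrFun h a
    have hb := congrFun h b
    have hc := congrFun h c
    simp only [pairVec] at ha hb hc
    split_ifs at ha hb hc <;> grind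
  · rintro (⟨rfl, rfl⟩ | ⟨rfl, rfl⟩)
    · rfl
    · exact funext fun _ => add_comm _ _

lemma exists_eq_pairVec_of_sum_eq_two [Fintype I] {x : I → ℕ} (hx : ∑ i, x i = 2) :
    ∃ a b, x = pairVec a b := by
  set m : Multiset I := ∑ i, x i • {i}
  have hm : Multiset.card m = 2 := by simp [m, hx]
  obtain ⟨a, b, hab⟩ := Multiset.card_eq_two.mp hm
  refine ⟨a, b, ?_⟩
  rw [pairVec_eq_count, ← hab]
  funext i
  simp [m, Multiset.count_sum', Multiset.count_singleton]

end PairVec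

section Fiber

variable {n r : ℕ}

lemma suffN_pairVec (a b : Fin r ↪ Fin n) (j : Fin r) (k : Fin n) :
    suffN n r (pairVec a b) (j, k) = pairVec (a j) (b j) k := by
  have hsingle (c : Fin r ↪ Fin n) :
      (∑ σ : Fin r ↪ Fin n, if σ j = k then (if σ = c then 1 else 0) else 0) =
        if k = c j then 1 else 0 := by
    rw [Fintype.sum_eq_single c fun σ hσ => by simp [hσ]]
    simp [eq_comm]
  simp only [suffN, pairVec, ite_add_zero, Finset.sum_add_distrib, hsingle]

lemma sum_suffN_row (x : (Fin r ↪ Fin n) → ℕ) (j : Fin r) :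
    ∑ k, suffN n r x (j, k) = ∑ σ, x σ := by
  simp only [suffN]
  rw [Finset.sum_comm]
  simp [Finset.sum_ite_eq]

lemma suffN_pairVec_eq_iff {a b c d : Fin r ↪ Fin n} :
    suffN n r (pairVec a b) = suffN n r (pairVec c d) ↔
      ∀ j, (a j = c j ∧ b j = d j) ∨ (a j = d j ∧ b j = c j) := by
  rw [funext_iff, Prod.forall]
  refine forall_congr' fun j => ?_
  simp only [suffN_pairVec, ← funext_iff, pairVec_eq_pairVec_iff]

lemma exists_eq_pairVec_of_suffN_eq (hr : 0 < r) {x : (Fin r ↪ Fin n) → ℕ}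
    {c d : Fin r ↪ Fin n} (hx : suffN n r x = suffN n r (pairVec c d)) :
    ∃ a b, x = pairVec a b := by
  apply exists_eq_pairVec_of_sum_eq_two
  calc ∑ σ, x σ = ∑ σ, pairVec c d σ := by
        rw [← sum_suffN_row x ⟨0, hr⟩, ← sum_suffN_row _ ⟨0, hr⟩, hx]
    _ = 2 := by simp [pairVec, Finset.sum_add_distrib]

lemma IsMarkovBasis.mem_or_mem_of_fiber_eq_pair {B : Finset ((Fin r ↪ Fin n) → ℤ)}
    (hB : IsMarkovBasis n r B) {x y : (Fin r ↪ Fin n) → ℕ} (hxy : x ≠ y)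
    (hsuff : suffN n r x = suffN n r y) (hfib : ∀ z, suffN n r z = suffN n r x → z = x ∨ z = y) :
    (fun σ => (x σ : ℤ) - (y σ : ℤ)) ∈ B ∨ (fun σ => (y σ : ℤ) - (x σ : ℤ)) ∈ B := by
  obtain ⟨m, w, h0, hm, hfw, hstep⟩ := hB.2 x y hsuff
  obtain ⟨i, hi, hwi, hwi1⟩ :=
    exists_step_of_forall_eq_or_eq hxy h0 hm fun i hi => hfib _ (hfw i hi)
  have := hstep i hi
  rw [hwi, hwi1] at this
  exact this.symm

end Fiber

namespace blockGraph

open SimpleGraph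

variable {n r : ℕ} {σ₁ σ₂ : Fin r ↪ Fin n}

lemma not_adj_of_eq {j : Fin r} (h : σ₁ j = σ₂ j) (j' : Fin r) :
    ¬ (blockGraph n r σ₁ σ₂).Adj j j' := by
  rintro ⟨hne, h' | h' | h' | h'⟩
  · exact hne (σ₁.injective h')
  · exact hne (σ₂.injective (h.symm.trans h'))
  · exact hne (σ₁.injective (h.trans h'))
  · exact hne (σ₂.injective h')

lemma isTrivialComp_mk_iff (j : Fin r) :
    IsTrivialComp n r σ₁ σ₂ ((blockGraph n r σ₁ σ₂).connectedComponentMk j) ↔ σ₁ j = σ₂ j := by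
  constructor
  · rintro ⟨j', hj, hfix, hiso⟩
    obtain ⟨w⟩ := ConnectedComponent.exact hj.symm
    cases w with
    | nil => exact hfix
    | cons hadj _ => exact absurd hadj (hiso _)
  · exact fun h => ⟨j, rfl, h, not_adj_of_eq h⟩

variable {a b : Fin r ↪ Fin n}

lemma eq_left_iff_of_adj (hab : ∀ j, (a j = σ₁ j ∧ b j = σ₂ j) ∨ (a j = σ₂ j ∧ b j = σ₁ j))
    {j j' : Fin r} (hadj : (blockGraph n r σ₁ σ₂).Adj j j') : a j = σ₁ j ↔ a j' = σ₁ j' := by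
  obtain ⟨hne, hjj'⟩ := hadj
  have := σ₁.injective.ne hne
  have := σ₂.injective.ne hne
  have := a.injective.ne hne
  have := b.injective.ne hne
  rcases hab j with ⟨ha, hb⟩ | ⟨ha, hb⟩ <;> rcases hab j' with ⟨ha', hb'⟩ | ⟨ha', hb'⟩ <;> grind

lemma eq_left_iff_of_reachable
    (hab : ∀ j, (a j = σ₁ j ∧ b j = σ₂ j) ∨ (a j = σ₂ j ∧ b j = σ₁ j))
    {j j' : Fin r} (h : (blockGraph n r σ₁ σ₂).Reachable j j') : a j = σ₁ j ↔ a j' = σ₁ j' := by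
  obtain ⟨w⟩ := h
  induction w with
  | nil => rfl
  | cons hadj _ ih => exact (eq_left_iff_of_adj hab hadj).trans ih

end blockGraph

section Swap

open SimpleGraph

variable {n r : ℕ}

open scoped Classical in
noncomputable def swapOn (σ₁ σ₂ : Fin r ↪ Fin n)
    (P : Set (blockGraph n r σ₁ σ₂).ConnectedComponent) : Fin r ↪ Fin n where
  toFun j := if (blockGraph n r σ₁ σ₂).connectedComponentMk j ∈ P then σ₂ j else σ₁ j
  inj' := by
    intro j j' h
    by_contra hne
    have mk_eq (h' : σ₂ j = σ₁ j' ∨ σ₁ j = σ₂ j') :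
        (blockGraph n r σ₁ σ₂).connectedComponentMk j =
          (blockGraph n r σ₁ σ₂).connectedComponentMk j' :=
      ConnectedComponent.connectedComponentMk_eq_of_adj ⟨hne, by tauto⟩
    dsimp only at h
    by_cases hj : (blockGraph n r σ₁ σ₂).connectedComponentMk j ∈ P <;>
      by_cases hj' : (blockGraph n r σ₁ σ₂).connectedComponentMk j' ∈ P <;>
      simp only [hj, hj', if_true, if_false] at h
    · exact hne (σ₂.injective h)
    · exact hj' (mk_eq (Or.inl h) ▸ hj)
    · exact hj (mk_eq (Or.inr h) ▸ hj')
    · exact hne (σ₁.injective h)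

def nontrivialComps (σ₁ σ₂ : Fin r ↪ Fin n) : Set (blockGraph n r σ₁ σ₂).ConnectedComponent :=
  {c | ¬ IsTrivialComp n r σ₁ σ₂ c}

noncomputable def swapPair (σ₁ σ₂ : Fin r ↪ Fin n)
    (P : Set (blockGraph n r σ₁ σ₂).ConnectedComponent) : (Fin r ↪ Fin n) → ℕ :=
  pairVec (swapOn σ₁ σ₂ P) (swapOn σ₁ σ₂ Pᶜ)

variable {σ₁ σ₂ : Fin r ↪ Fin n} {P Q : Set (blockGraph n r σ₁ σ₂).ConnectedComponent}
  {j : Fin r}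

open scoped Classical in
lemma swapOn_apply : swapOn σ₁ σ₂ P j =
    if (blockGraph n r σ₁ σ₂).connectedComponentMk j ∈ P then σ₂ j else σ₁ j :=
  rfl

lemma swapOn_apply_of_mem (h : (blockGraph n r σ₁ σ₂).connectedComponentMk j ∈ P) :
    swapOn σ₁ σ₂ P j = σ₂ j := by
  rw [swapOn_apply, if_pos h]

lemma swapOn_apply_of_notMem (h : (blockGraph n r σ₁ σ₂).connectedComponentMk j ∉ P) :
    swapOn σ₁ σ₂ P j = σ₁ j := by
  rw [swapOn_apply, if_neg h]

lemma mk_mem_nontrivialComps_iff :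
    (blockGraph n r σ₁ σ₂).connectedComponentMk j ∈ nontrivialComps σ₁ σ₂ ↔ σ₁ j ≠ σ₂ j :=
  (blockGraph.isTrivialComp_mk_iff j).not

lemma swapOn_apply_eq_right_iff (hj : σ₁ j ≠ σ₂ j) :
    swapOn σ₁ σ₂ P j = σ₂ j ↔ (blockGraph n r σ₁ σ₂).connectedComponentMk j ∈ P := by
  by_cases h : (blockGraph n r σ₁ σ₂).connectedComponentMk j ∈ P
  · simp only [swapOn_apply_of_mem h, h]
  · simp only [swapOn_apply_of_notMem h, h, hj]

lemma swapOn_eq_swapOn_iff :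
    swapOn σ₁ σ₂ P = swapOn σ₁ σ₂ Q ↔
      P ∩ nontrivialComps σ₁ σ₂ = Q ∩ nontrivialComps σ₁ σ₂ := by
  constructor
  · intro h
    ext c
    induction c using ConnectedComponent.ind with | h j => ?_
    simp only [Set.mem_inter_iff, mk_mem_nontrivialComps_iff]
    refine and_congr_left fun hj => ?_
    rw [← swapOn_apply_eq_right_iff hj, ← swapOn_apply_eq_right_iff hj, h]
  · intro h
    refine DFunLike.ext _ _ fun j => ?_
    by_cases hj : σ₁ j = σ₂ j
    · simp only [swapOn_apply, hj, ite_self]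
    · have hPQ := Set.ext_iff.mp h ((blockGraph n r σ₁ σ₂).connectedComponentMk j)
      simp only [Set.mem_inter_iff, mk_mem_nontrivialComps_iff, ne_eq, hj, not_false_eq_true,
        and_true] at hPQ
      classical
      rw [swapOn_apply, swapOn_apply]
      exact if_congr hPQ rfl rfl

lemma suffN_swapPair (P : Set (blockGraph n r σ₁ σ₂).ConnectedComponent) :
    suffN n r (swapPair σ₁ σ₂ P) = suffN n r (pairVec σ₁ σ₂) := by
  refine suffN_pairVec_eq_iff.mpr fun j => ?_
  by_cases h : (blockGraph n r σ₁ σ₂).connectedComponentMk j ∈ P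
  · exact Or.inr ⟨swapOn_apply_of_mem h, swapOn_apply_of_notMem (Set.notMem_compl_iff.mpr h)⟩
  · exact Or.inl ⟨swapOn_apply_of_notMem h, swapOn_apply_of_mem h⟩

lemma swapPair_eq_swapPair_iff :
    swapPair σ₁ σ₂ P = swapPair σ₁ σ₂ Q ↔
      P ∩ nontrivialComps σ₁ σ₂ = Q ∩ nontrivialComps σ₁ σ₂ ∨
        P ∩ nontrivialComps σ₁ σ₂ = Qᶜ ∩ nontrivialComps σ₁ σ₂ := by
  rw [swapPair, swapPair, pairVec_eq_pairVec_iff]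
  simp only [swapOn_eq_swapOn_iff, Set.compl_inter_eq_inter_iff, compl_compl, and_self]

lemma exists_swapPair_eq (hr : 0 < r) {x : (Fin r ↪ Fin n) → ℕ}
    (hx : suffN n r x = suffN n r (pairVec σ₁ σ₂)) : ∃ P, swapPair σ₁ σ₂ P = x := by
  obtain ⟨a, b, rfl⟩ := exists_eq_pairVec_of_suffN_eq hr hx
  have hab := suffN_pairVec_eq_iff.mp hx
  set P : Set (blockGraph n r σ₁ σ₂).ConnectedComponent :=
    {c | ∃ j, (blockGraph n r σ₁ σ₂).connectedComponentMk j = c ∧ a j ≠ σ₁ j}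
  have hP (j : Fin r) : (blockGraph n r σ₁ σ₂).connectedComponentMk j ∈ P ↔ a j ≠ σ₁ j := by
    refine ⟨fun ⟨j', hj', h⟩ => ?_, fun h => ⟨j, rfl, h⟩⟩
    exact mt (blockGraph.eq_left_iff_of_reachable hab (ConnectedComponent.exact hj')).mpr h
  have hswap (j : Fin r) : swapOn σ₁ σ₂ P j = a j ∧ swapOn σ₁ σ₂ Pᶜ j = b j := by
    have := hab j
    by_cases h : a j = σ₁ j
    · have hj : (blockGraph n r σ₁ σ₂).connectedComponentMk j ∉ P := fun hj => (hP j).mp hj h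
      rw [swapOn_apply_of_notMem hj, swapOn_apply_of_mem hj]
      grind
    · have hj := (hP j).mpr h
      rw [swapOn_apply_of_mem hj, swapOn_apply_of_notMem (Set.notMem_compl_iff.mpr hj)]
      grind
  refine ⟨P, ?_⟩
  rw [swapPair, show swapOn σ₁ σ₂ P = a from DFunLike.ext _ _ fun j => (hswap j).1,
    show swapOn σ₁ σ₂ Pᶜ = b from DFunLike.ext _ _ fun j => (hswap j).2]

end Swap

lemma classifiesUnorderedSplits_swapPair {n r : ℕ} (hr : 0 < r) (σ₁ σ₂ : Fin r ↪ Fin n) :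
    ClassifiesUnorderedSplits (nontrivialComps σ₁ σ₂) fun P =>
      (⟨swapPair σ₁ σ₂ P, suffN_swapPair P⟩ : {x // suffN n r x = suffN n r (pairVec σ₁ σ₂)}) :=
  ⟨fun ⟨_, hx⟩ => (exists_swapPair_eq hr hx).imp fun _ hP => Subtype.ext hP,
    fun _ _ => Subtype.ext_iff.trans swapPair_eq_swapPair_iff⟩

theorem fiber_two_elements_iff_and_indispensable_general
    (n r : ℕ) (hr : 2 ≤ r) (σ₁ σ₂ : Fin r ↪ Fin n) :
    (Nat.card {x : (Fin r ↪ Fin n) → ℕ //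
        suffN n r x =
          suffN n r (fun τ => (if τ = σ₁ then 1 else 0) + (if τ = σ₂ then 1 else 0))} = 2
      ↔ numComp n r σ₁ σ₂ = 2) ∧
    (numComp n r σ₁ σ₂ = 2 →
      ∀ x y : (Fin r ↪ Fin n) → ℕ,
        suffN n r x =
          suffN n r (fun τ => (if τ = σ₁ then 1 else 0) + (if τ = σ₂ then 1 else 0)) →
        suffN n r y =
          suffN n r (fun τ => (if τ = σ₁ then 1 else 0) + (if τ = σ₂ then 1 else 0)) →
        x ≠ y →
        ∀ B : Finset ((Fin r ↪ Fin n) → ℤ), IsMarkovBasis n r B →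
          (fun σ => (x σ : ℤ) - (y σ : ℤ)) ∈ B ∨
          (fun σ => (y σ : ℤ) - (x σ : ℤ)) ∈ B) := by
  have hcard := (classifiesUnorderedSplits_swapPair (by omega) σ₁ σ₂).card_eq_two_iff
  refine ⟨hcard, fun hL x y hx hy hxy B hB => ?_⟩
  refine hB.mem_or_mem_of_fiber_eq_pair hxy (hx.trans hy.symm) fun z hz => ?_
  have hxy' : (⟨x, hx⟩ : {x // suffN n r x = suffN n r (pairVec σ₁ σ₂)}) ≠ ⟨y, hy⟩ :=
    fun h => hxy (congrArg Subtype.val h)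
  simpa [Subtype.ext_iff] using Nat.eq_or_eq_of_card_eq_two (hcard.mpr hL) hxy' ⟨z, hz.trans hx⟩

/-- For `2 ≤ r ≤ n` and proper votes given by injections `σ₁, σ₂` with
sufficient statistic `t = A_{n,r}(e_{σ₁} + e_{σ₂})`, the fiber `F_t` has exactly two
elements iff `L = 2`, and in that case every Markov basis of `A_{n,r}` contains `x - y`
or `y - x`, where `F_t = {x, y}`. -/
theorem fiber_two_elements_iff_and_indispensable
    (n r : ℕ) (hr : 2 ≤ r) (hrn : r ≤ n) (σ₁ σ₂ : Fin r ↪ Fin n) :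
    (Nat.card {x : (Fin r ↪ Fin n) → ℕ //
        suffN n r x =
          suffN n r (fun τ => (if τ = σ₁ then 1 else 0) + (if τ = σ₂ then 1 else 0))} = 2
      ↔ numComp n r σ₁ σ₂ = 2) ∧
    (numComp n r σ₁ σ₂ = 2 →
      ∀ x y : (Fin r ↪ Fin n) → ℕ,
        suffN n r x =
          suffN n r (fun τ => (if τ = σ₁ then 1 else 0) + (if τ = σ₂ then 1 else 0)) →
        suffN n r y =
          suffN n r (fun τ => (if τ = σ₁ then 1 else 0) + (if τ = σ₂ then 1 else 0)) →
        x ≠ y →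
        ∀ B : Finset ((Fin r ↪ Fin n) → ℤ), IsMarkovBasis n r B →
          (fun σ => (x σ : ℤ) - (y σ : ℤ)) ∈ B ∨
          (fun σ => (y σ : ℤ) - (x σ : ℤ)) ∈ B) :=
  fiber_two_elements_iff_and_indispensable_general n r hr σ₁ σ₂
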